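/- If u solves the gradient flow ∂_t u = -L(u) and the coercivity E(v) ≥ c‖dv‖²_{L²} holds for all smooth v, then for all t ∈ [0,T): ‖du(·,t)‖²_{L²} ≤ E(u₀)/c and ‖τ(u(·,t))‖²_{L²} ≤ C for a constant C depending only on u₀, M, N. -/
import Mathlib


/-- Abstract setting for the gradient flow `∂ₜu = -L(u)` of the conformal energy `E`,
for maps from a compact Riemannian 4-manifold `(M,g)` to a compact Riemannian manifold
`(N,h)` with non-positive curvature. `Map` = `C^∞(M,N)`, `Vel` = sections of `u*TN`,
`ip` = `L²` inner product, `E` = conformal energy, `L` = its gradient (C-harmonic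
operator), `dL2sq u = ‖du‖²_{L²}`, `tauL2sq u = ‖τ(u)‖²_{L²}`,
`scalTerm u = ∫ S^M|du|² dv_g`, `ricTerm u = ∫ Ric^M(du,du) dv_g`.
`first_variation` is `d/dt E(u(t)) = 2⟨L(u(t)), ∂ₜu(t)⟩_{L²}` (whence the energy is
non-increasing along the flow). -/
structure CHFlow where
  Map : Type
  Vel : Type
  ip : Vel → Vel → ℝ
  negV : Vel → Vel
  ip_symm : ∀ v w, ip v w = ip w v
  ip_neg_left : ∀ v w, ip (negV v) w = - ip v w
  ip_self_nonneg : ∀ v, 0 ≤ ip v v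
  E : Map → ℝ
  L : Map → Vel
  dL2sq : Map → ℝ
  tauL2sq : Map → ℝ
  scalTerm : Map → ℝ
  ricTerm : Map → ℝ
  dL2sq_nonneg : ∀ u, 0 ≤ dL2sq u
  tauL2sq_nonneg : ∀ u, 0 ≤ tauL2sq u
  E_def : ∀ u, E u = tauL2sq u + (2/3) * scalTerm u - 2 * ricTerm u
  lower_order_bound : ∃ c > (0:ℝ), ∀ u, |(2/3) * scalTerm u - 2 * ricTerm u| ≤ c * dL2sq u
  T : ℝ
  hT : 0 < T
  u : ℝ → Map
  ut : ℝ → Vel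
  first_variation : ∀ t ∈ Set.Ico (0:ℝ) T,
    HasDerivAt (fun s => E (u s)) (2 * ip (L (u t)) (ut t)) t

/-- The flow equation `∂ₜu = -L(u)` on `[0,T)`. -/
def CHFlow.SolvesFlow (S : CHFlow) : Prop :=
  ∀ t ∈ Set.Ico (0:ℝ) S.T, S.ut t = S.negV (S.L (S.u t))

/-- **first estimates of Lemma 3.** If `u` solves the gradient flow
`∂ₜu = -L(u)` and the coercivity `E(v) ≥ c‖dv‖²_{L²}` holds for all smooth `v`
(with `c > 0`), then for all `t ∈ [0,T)`:
`‖du(·,t)‖²_{L²} ≤ E(u₀)/c`, and `‖τ(u(·,t))‖²_{L²} ≤ C` for a constant `C`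
depending only on `u₀`, `M`, `N`. -/
theorem flow_first_estimates (S : CHFlow)
    (hflow : S.SolvesFlow)
    (c : ℝ) (hc : 0 < c)
    (hco : ∀ v : S.Map, c * S.dL2sq v ≤ S.E v) :
    (∀ t ∈ Set.Ico (0:ℝ) S.T, S.dL2sq (S.u t) ≤ S.E (S.u 0) / c) ∧
    ∃ C : ℝ, ∀ t ∈ Set.Ico (0:ℝ) S.T, S.tauL2sq (S.u t) ≤ C := by

  -- Energy is non-increasing along the flow.
  have key : ∀ t ∈ Set.Ico (0:ℝ) S.T, S.E (S.u t) ≤ S.E (S.u 0) := by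
    intro t ht
    have hanti : AntitoneOn (fun s => S.E (S.u s)) (Set.Icc 0 t) := by
      have hsub : Set.Icc (0:ℝ) t ⊆ Set.Ico 0 S.T := by
        intro x hx
        exact ⟨hx.1, lt_of_le_of_lt hx.2 ht.2⟩
      apply AntitoneOn.mono (s := Set.Ico (0:ℝ) S.T) ?_ hsub
      apply antitoneOn_of_hasDerivWithinAt_nonpos (convex_Ico 0 S.T)
      · intro x hx
        exact ((S.first_variation x hx).continuousAt).continuousWithinAt
      · intro x hx
        have hx' : x ∈ Set.Ico (0:ℝ) S.T := by
          rw [interior_Ico] at hx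
          exact ⟨hx.1.le, hx.2⟩
        exact ((S.first_variation x hx').hasDerivWithinAt)
      · intro x hx
        have hx' : x ∈ Set.Ico (0:ℝ) S.T := by
          rw [interior_Ico] at hx
          exact ⟨hx.1.le, hx.2⟩
        rw [hflow x hx', S.ip_symm, S.ip_neg_left]
        have := S.ip_self_nonneg (S.L (S.u x))
        nlinarith
    exact hanti (Set.left_mem_Icc.mpr ht.1) (Set.right_mem_Icc.mpr ht.1) ht.1
  have hd : ∀ t ∈ Set.Ico (0:ℝ) S.T, S.dL2sq (S.u t) ≤ S.E (S.u 0) / c := by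
    intro t ht
    have h1 := hco (S.u t)
    have h2 := key t ht
    rw [le_div_iff₀ hc]
    linarith [mul_comm c (S.dL2sq (S.u t))]
  refine ⟨hd, ?_⟩
  obtain ⟨c', hc', hlow⟩ := S.lower_order_bound
  refine ⟨S.E (S.u 0) + c' * (S.E (S.u 0) / c), fun t ht => ?_⟩
  have h1 := S.E_def (S.u t)
  have h2 := key t ht
  have h3 := hlow (S.u t)
  have h4 := hd t ht
  have h5 := abs_le.mp h3
  nlinarith
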